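/- Let $g(\beta) = \frac{\sqrt{3-4\beta}(1-2\beta)(\pi^2(1-\beta)+9) + 3\pi(-8\beta^2+7\beta-1)}{144(1-\beta)}$ on $(0, 3/4)$. Then $g(\beta) > 0$ for all $\beta \in (0, 6/10]$ and $g(\beta) < 0$ for all $\beta \in [65/100, 3/4)$. -/
import Mathlib


open Real

noncomputable def g (β : ℝ) : ℝ :=
  (Real.sqrt (3 - 4 * β) * (1 - 2 * β) * (π ^ 2 * (1 - β) + 9) +
    3 * π * (-8 * β ^ 2 + 7 * β - 1)) / (144 * (1 - β))

lemma quintic_pos (s p : ℝ) (hs0 : 0 ≤ s)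
    (hp1 : 3.141592 < p) (hp2 : p < 3.1416)
    (hl : 0.7745 ≤ s) (hu : s ≤ 1.7321) :
    0 < p^2 * s^5 - 12*p*s^4 + 36*s^3 + 30*p*s^2 - (p^2+36)*s - 6*p := by
  have hP : 0 ≤ (p - 3.141592) * (3.1416 - p) := mul_nonneg (by linarith) (by linarith)
  rcases le_or_gt s 1.25 with h | h
  · have hA : 0 ≤ (s - 0.7745) * (1.25 - s) := mul_nonneg (by linarith) (by linarith)
    nlinarith [hA, mul_nonneg hA hs0, mul_nonneg (mul_nonneg hA hs0) hs0,
      mul_nonneg (mul_nonneg (mul_nonneg hA hs0) hs0) hs0, hP,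
      mul_nonneg hP hs0, mul_nonneg hA (le_of_lt (by linarith : (0:ℝ) < p)),
      mul_nonneg (mul_nonneg hA hs0) (le_of_lt (by linarith : (0:ℝ) < p))]
  · have hA : 0 ≤ (s - 1.25) * (1.7321 - s) := mul_nonneg (by linarith) (by linarith)
    nlinarith [hA, mul_nonneg hA hs0, mul_nonneg (mul_nonneg hA hs0) hs0,
      mul_nonneg (mul_nonneg (mul_nonneg hA hs0) hs0) hs0, hP,
      mul_nonneg hP hs0, mul_nonneg hA (le_of_lt (by linarith : (0:ℝ) < p)),
      mul_nonneg (mul_nonneg hA hs0) (le_of_lt (by linarith : (0:ℝ) < p))]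

lemma quintic_neg (s p : ℝ) (hs0 : 0 ≤ s)
    (hp1 : 3.141592 < p) (hp2 : p < 3.1416)
    (hu : s ≤ 0.63246) :
    p^2 * s^5 - 12*p*s^4 + 36*s^3 + 30*p*s^2 - (p^2+36)*s - 6*p < 0 := by
  have hA : 0 ≤ s * (0.63246 - s) := mul_nonneg hs0 (by linarith)
  have hP : 0 ≤ (p - 3.141592) * (3.1416 - p) := mul_nonneg (by linarith) (by linarith)
  nlinarith [hA, mul_nonneg hA hs0, mul_nonneg (mul_nonneg hA hs0) hs0,
    mul_nonneg (mul_nonneg (mul_nonneg hA hs0) hs0) hs0, hP,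
    mul_nonneg hP hs0, mul_nonneg hA (le_of_lt (by linarith : (0:ℝ) < p)),
    mul_nonneg (mul_nonneg hA hs0) (le_of_lt (by linarith : (0:ℝ) < p))]

theorem stmt_9 :
    (∀ β ∈ Set.Ioc (0 : ℝ) (6 / 10), 0 < g β) ∧
    (∀ β ∈ Set.Ico (65 / 100 : ℝ) (3 / 4), g β < 0) := by
  have hp1 : (3.141592 : ℝ) < π := by
    have := Real.pi_gt_d6; linarith
  have hp2 : π < (3.1416 : ℝ) := by
    have := Real.pi_lt_d2
    have := Real.pi_lt_d6; linarith
  constructor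
  · intro β ⟨hb0, hb1⟩
    have hnn : (0:ℝ) ≤ 3 - 4*β := by linarith
    set s := Real.sqrt (3 - 4 * β) with hsdef
    have hs0 : 0 ≤ s := Real.sqrt_nonneg _
    have hs : s^2 = 3 - 4*β := Real.sq_sqrt hnn
    have hl : (0.7745 : ℝ) ≤ s := by nlinarith [sq_nonneg (s - 0.7745)]
    have hu : s ≤ (1.7321 : ℝ) := by nlinarith [sq_nonneg (s - 1.7321)]
    have key := quintic_pos s π hs0 hp1 hp2 hl hu
    have hb : β = (3 - s^2)/4 := by linarith
    have hnum : 0 < s * (1 - 2 * β) * (π ^ 2 * (1 - β) + 9) +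
        3 * π * (-8 * β ^ 2 + 7 * β - 1) := by
      have heq : s * (1 - 2 * β) * (π ^ 2 * (1 - β) + 9) +
          3 * π * (-8 * β ^ 2 + 7 * β - 1) =
          (π^2 * s^5 - 12*π*s^4 + 36*s^3 + 30*π*s^2 - (π^2+36)*s - 6*π)/8 := by
        rw [hb]; ring
      rw [heq]; linarith
    unfold g
    exact div_pos hnum (by linarith)
  · intro β ⟨hb0, hb1⟩
    have hnn : (0:ℝ) ≤ 3 - 4*β := by linarith
    set s := Real.sqrt (3 - 4 * β) with hsdef
    have hs0 : 0 ≤ s := Real.sqrt_nonneg _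
    have hs : s^2 = 3 - 4*β := Real.sq_sqrt hnn
    have hu : s ≤ (0.63246 : ℝ) := by nlinarith [sq_nonneg (s - 0.63246)]
    have key := quintic_neg s π hs0 hp1 hp2 hu
    have hb : β = (3 - s^2)/4 := by linarith
    have hnum : s * (1 - 2 * β) * (π ^ 2 * (1 - β) + 9) +
        3 * π * (-8 * β ^ 2 + 7 * β - 1) < 0 := by
      have heq : s * (1 - 2 * β) * (π ^ 2 * (1 - β) + 9) +
          3 * π * (-8 * β ^ 2 + 7 * β - 1) =
          (π^2 * s^5 - 12*π*s^4 + 36*s^3 + 30*π*s^2 - (π^2+36)*s - 6*π)/8 := by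
        rw [hb]; ring
      rw [heq]; linarith
    unfold g
    exact div_neg_of_neg_of_pos hnum (by linarith)
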